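/- arXiv:0807.2129 — 6 statements merged into one kernel-verified Lean document; each statement's English description precedes it below -/
import Mathlib

section
/- Let n ≥ 1 and let D : [0,1] → M_n(ℂ) be a continuously differentiable path of Hermitian matrices such that D(0) and D(1) are invertible. Let h : ℝ → ℝ be continuous and let H : ℝ → ℝ be an antiderivative of h (i.e. H′(x) = h(x) for every x ∈ ℝ). Let sgn : ℝ → ℝ denote the sign function. Then n₋(D(0)) − n₋(D(1)) = ∫₀¹ tr(D′(t)·h(D(t))) dt + tr(H(D(0))) − tr(H(D(1))) + ½·(tr(sgn(D(1))) − tr(sgn(D(0)))), where all the traces appearing are real numbers. (This is the finite-dimensional instance of the paper's main analytic spectral flow formula, where the spectral flow of a path of Hermitian matrices with invertible endpoints equals n₋(D(0)) − n₋(D(1)).) -/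
attribute [local instance] Matrix.normedAddCommGroup Matrix.normedSpace

/-- The number of negative eigenvalues (with multiplicity) of a Hermitian matrix. -/
noncomputable def negEigCount {n : ℕ} {M : Matrix (Fin n) (Fin n) ℂ}
    (hM : M.IsHermitian) : ℕ :=
  Nat.card {i : Fin n // hM.eigenvalues i < 0}

/-!
For a polynomial `q`, the product rule and cyclicity of the trace give
`d/dt tr q(D t) = tr (D' t * q'(D t))`. Approximate `h` locally uniformly by polynomials `p k`
(Weierstrass) and `H` by antiderivatives `Q k` of `p k` with `Q k 0 = H 0`. Since `cfc f M` is
controlled entrywise by the sup of `|f|` on the eigenvalues, which stay bounded along compact pieces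
of the path, `tr (Q k)(D t) → tr H(D t)` pointwise while the derivatives `tr (D' t * (p k)(D t))`
converge locally uniformly; hence `d/dt tr H(D t) = tr (D' t * h(D t))` and the fundamental theorem
of calculus evaluates the integral. Finally `tr sgn(M) = n - 2 n₋(M)` for invertible Hermitian `M`.
-/

open Matrix Polynomial Filter Topology

theorem Polynomial.exists_derivative_eq {K : Type*} [Field K] [CharZero K] (p : K[X]) :
    ∃ P : K[X], derivative P = p := by
  induction p using Polynomial.induction_on' with
  | add p q hp hq =>
    obtain ⟨P, rfl⟩ := hp
    obtain ⟨Q, rfl⟩ := hq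
    exact ⟨P + Q, derivative_add⟩
  | monomial k c =>
    refine ⟨monomial (k + 1) (c / (k + 1)), ?_⟩
    rw [derivative_monomial]
    simp only [Nat.add_sub_cancel, Nat.cast_add, Nat.cast_one]
    congr 1
    field_simp

theorem exists_polynomial_tendstoLocallyUniformly {h : ℝ → ℝ} (hh : Continuous h) :
    ∃ p : ℕ → ℝ[X], TendstoLocallyUniformly (fun k x => (p k).eval x) h atTop := by
  have happrox (k : ℕ) : ∃ p : ℝ[X], ∀ x ∈ Set.Icc (-k : ℝ) k, |p.eval x - h x| < 1 / (k + 1) :=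
    exists_polynomial_near_of_continuousOn _ _ h hh.continuousOn _ (by positivity)
  choose p hp using happrox
  refine ⟨p, tendstoLocallyUniformly_iff_forall_isCompact.mpr fun K hK => ?_⟩
  obtain ⟨C, hC⟩ := hK.exists_bound_of_continuousOn continuous_id.continuousOn
  obtain ⟨N, hN⟩ := exists_nat_ge C
  refine Metric.tendstoUniformlyOn_iff.mpr fun ε hε => ?_
  filter_upwards [eventually_ge_atTop N,
    tendsto_one_div_add_atTop_nhds_zero_nat.eventually (gt_mem_nhds hε)] with k hkN hkε x hx
  have hxk : |x| ≤ k := (hC x hx).trans (hN.trans (Nat.cast_le.mpr hkN))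
  rw [Real.dist_eq, abs_sub_comm]
  exact (hp k x (abs_le.mp hxk)).trans hkε

theorem TendstoLocallyUniformly.tendsto_of_hasDerivAt {κ E : Type*} {l : Filter κ}
    [NormedAddCommGroup E] [NormedSpace ℝ E] {F F' : κ → ℝ → E} {f f' : ℝ → E}
    (hF' : TendstoLocallyUniformly F' f' l) (hF : ∀ k x, HasDerivAt (F k) (F' k x) x)
    (hf : ∀ x, HasDerivAt f (f' x) x) (h0 : ∀ k, F k 0 = f 0) (x : ℝ) :
    Tendsto (fun k => F k x) l (𝓝 (f x)) := by
  refine Metric.tendsto_nhds.mpr fun ε hε => ?_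
  have hδ : 0 < ε / (|x| + 1) := by positivity
  filter_upwards [Metric.tendstoUniformlyOn_iff.mp (tendstoLocallyUniformly_iff_forall_isCompact.mp
    hF' _ isCompact_uIcc) _ hδ] with k hk
  have hmvt := (convex_uIcc 0 x).norm_image_sub_le_of_norm_hasDerivWithin_le
    (f := fun y => F k y - f y)
    (fun y _ => ((hF k y).sub (hf y)).hasDerivWithinAt)
    (fun y hy => by rw [← dist_eq_norm, dist_comm]; exact (hk y hy).le)
    Set.left_mem_uIcc Set.right_mem_uIcc
  rw [h0, sub_self, sub_zero, sub_zero, Real.norm_eq_abs] at hmvt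
  rw [dist_eq_norm]
  calc _ ≤ ε / (|x| + 1) * |x| := hmvt
    _ < ε := by
      rw [div_mul_eq_mul_div, div_lt_iff₀ (by positivity)]
      nlinarith [abs_nonneg x]

variable {ι : Type*} [Fintype ι]

section MatrixDeriv

variable {D E : ℝ → Matrix ι ι ℂ} {D' E' : Matrix ι ι ℂ} {t : ℝ}

theorem HasDerivAt.matrix_apply (hD : HasDerivAt D D' t) (i j : ι) :
    HasDerivAt (fun s => D s i j) (D' i j) t :=
  hasDerivAt_pi.mp (hasDerivAt_pi.mp hD i) j

theorem HasDerivAt.matrix_mul (hD : HasDerivAt D D' t) (hE : HasDerivAt E E' t) :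
    HasDerivAt (fun s => D s * E s) (D' * E t + D t * E') t := by
  refine hasDerivAt_pi.mpr fun i => hasDerivAt_pi.mpr fun j => ?_
  simp only [mul_apply, Matrix.add_apply, ← Finset.sum_add_distrib]
  exact HasDerivAt.fun_sum fun k _ => (hD.matrix_apply i k).mul (hE.matrix_apply k j)

theorem HasDerivAt.matrix_trace (hD : HasDerivAt D D' t) :
    HasDerivAt (fun s => (D s).trace) D'.trace t :=
  HasDerivAt.fun_sum fun i _ => hD.matrix_apply i i

theorem Matrix.isHermitian_of_hasDerivAt (hD : ∀ s, (D s).IsHermitian) (hD' : HasDerivAt D D' t) :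
    D'.IsHermitian := by
  have hstar : HasDerivAt (fun s => star (D s)) (star D') t := hD'.star
  rw [show (fun s => star (D s)) = D from funext fun s => (hD s).eq] at hstar
  exact (hD'.unique hstar).symm

variable [DecidableEq ι]

theorem HasDerivAt.matrix_pow (hD : HasDerivAt D D' t) (k : ℕ) :
    HasDerivAt (fun s => D s ^ k)
      (∑ j ∈ Finset.range k, D t ^ j * D' * D t ^ (k - 1 - j)) t := by
  induction k with
  | zero =>
    simp only [pow_zero, Finset.range_zero, Finset.sum_empty]
    exact hasDerivAt_const t _
  | succ k ih =>
    simp only [pow_succ']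
    refine (hD.matrix_mul ih).congr_deriv ?_
    rw [Finset.sum_range_succ', Finset.mul_sum, add_comm]
    congr 1
    · refine Finset.sum_congr rfl fun j hj => ?_
      rw [Finset.mem_range] at hj
      rw [← mul_assoc, ← mul_assoc, ← pow_succ', show k + 1 - 1 - (j + 1) = k - 1 - j by omega]
    · simp

theorem HasDerivAt.matrix_trace_pow (hD : HasDerivAt D D' t) (k : ℕ) :
    HasDerivAt (fun s => (D s ^ k).trace) (k * (D' * D t ^ (k - 1)).trace) t := by
  refine (hD.matrix_pow k).matrix_trace.congr_deriv ?_
  rw [trace_sum, Finset.sum_congr rfl fun j hj => ?_, Finset.sum_const, Finset.card_range,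
    nsmul_eq_mul]
  rw [Finset.mem_range] at hj
  rw [trace_mul_cycle, ← pow_add, trace_mul_comm, show k - 1 - j + j = k - 1 by omega]

theorem HasDerivAt.matrix_trace_aeval (hD : HasDerivAt D D' t) (q : ℝ[X]) :
    HasDerivAt (fun s => (aeval (D s) q).trace) (D' * aeval (D t) (derivative q)).trace t := by
  induction q using Polynomial.induction_on' with
  | add p q hp hq =>
    simp only [map_add, trace_add, mul_add]
    exact hp.fun_add hq
  | monomial k c =>
    simp only [aeval_monomial, derivative_monomial, ← Algebra.smul_def, trace_smul,
      mul_smul_comm]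
    refine ((hD.matrix_trace_pow k).const_smul c).congr_deriv ?_
    rw [Complex.real_smul, Complex.real_smul]
    push_cast
    ring

end MatrixDeriv

section HermitianCfc

variable [DecidableEq ι] {M : Matrix ι ι ℂ}

theorem Matrix.IsHermitian.trace_cfc (hM : M.IsHermitian) (f : ℝ → ℝ) :
    (cfc f M).trace = ∑ i, (f (hM.eigenvalues i) : ℂ) := by
  rw [hM.cfc_eq, Matrix.IsHermitian.cfc, Unitary.conjStarAlgAut_apply, trace_mul_cycle,
    Unitary.coe_star_mul_self, one_mul, trace_diagonal]
  rfl

theorem Matrix.IsHermitian.im_trace_cfc (hM : M.IsHermitian) (f : ℝ → ℝ) :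
    (cfc f M).trace.im = 0 := by
  simp [hM.trace_cfc]

omit [DecidableEq ι] in
theorem Matrix.IsHermitian.im_trace_mul {A B : Matrix ι ι ℂ} (hA : A.IsHermitian)
    (hB : B.IsHermitian) : (A * B).trace.im = 0 := by
  rw [← Complex.conj_eq_iff_im, ← Complex.star_def, ← trace_conjTranspose, conjTranspose_mul, hA.eq,
    hB.eq, trace_mul_comm]

theorem Matrix.IsHermitian.norm_cfc_apply_le (hM : M.IsHermitian) {f : ℝ → ℝ} {ε : ℝ}
    (hf : ∀ i, |f (hM.eigenvalues i)| ≤ ε) (i j : ι) :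
    ‖cfc f M i j‖ ≤ Fintype.card ι * ε := by
  have hU := hM.eigenvectorUnitary.2
  rw [hM.cfc_eq, Matrix.IsHermitian.cfc, Unitary.conjStarAlgAut_apply, mul_apply]
  calc _ ≤ ∑ k : ι, ε := norm_sum_le_of_le _ fun k _ => ?_
    _ = Fintype.card ι * ε := by simp
  rw [mul_diagonal, norm_mul, norm_mul, star_apply, norm_star]
  have hfk : ‖((RCLike.ofReal : ℝ → ℂ) ∘ f ∘ hM.eigenvalues) k‖ ≤ ε := by simpa using hf k
  calc _ ≤ 1 * ε * 1 :=
        mul_le_mul (mul_le_mul (entry_norm_bound_of_unitary hU i k) hfk (norm_nonneg _)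
          zero_le_one) (entry_norm_bound_of_unitary hU j k) (norm_nonneg _)
          (by linarith [(norm_nonneg _).trans hfk])
    _ = ε := by ring

omit [DecidableEq ι] in
theorem Matrix.norm_trace_mul_le {A B : Matrix ι ι ℂ} {c : ℝ} (hB : ∀ i j, ‖B i j‖ ≤ c) :
    ‖(A * B).trace‖ ≤ (∑ i, ∑ j, ‖A i j‖) * c := by
  rw [trace, Finset.sum_mul]
  refine norm_sum_le_of_le _ fun i _ => ?_
  rw [diag_apply, mul_apply, Finset.sum_mul]
  refine norm_sum_le_of_le _ fun j _ => ?_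
  rw [norm_mul]
  exact mul_le_mul_of_nonneg_left (hB j i) (norm_nonneg _)

theorem Matrix.IsHermitian.eigenvalues_ne_zero (hM : M.IsHermitian) (hMu : IsUnit M) (i : ι) :
    hM.eigenvalues i ≠ 0 := by
  intro hi
  apply ((isUnit_iff_isUnit_det M).mp hMu).ne_zero
  rw [hM.det_eq_prod_eigenvalues, Finset.prod_eq_zero (Finset.mem_univ i) (by simp [hi])]

end HermitianCfc

theorem Matrix.IsHermitian.trace_cfc_sign {n : ℕ} {M : Matrix (Fin n) (Fin n) ℂ}
    (hM : M.IsHermitian) (hMu : IsUnit M) :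
    (cfc Real.sign M).trace = n - 2 * negEigCount hM := by
  have hsign (i : Fin n) :
      Real.sign (hM.eigenvalues i) = 1 - 2 * if hM.eigenvalues i < 0 then 1 else 0 := by
    rcases (hM.eigenvalues_ne_zero hMu i).lt_or_gt with hneg | hpos
    · norm_num [Real.sign_of_neg hneg, hneg]
    · simp [Real.sign_of_pos hpos, hpos.not_gt]
  rw [hM.trace_cfc, ← Complex.ofReal_sum, Finset.sum_congr rfl fun i _ => hsign i,
    Finset.sum_sub_distrib, ← Finset.mul_sum, Finset.sum_boole]
  simp [negEigCount, Nat.card_eq_fintype_card, Fintype.card_subtype]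

section PathOfHermitian

variable [DecidableEq ι] {D : ℝ → Matrix ι ι ℂ}

theorem IsCompact.exists_forall_abs_eigenvalues_le {K : Set ℝ} (hK : IsCompact K)
    (hD : ∀ t, (D t).IsHermitian) (hDc : Continuous D) :
    ∃ R, ∀ t ∈ K, ∀ i, |(hD t).eigenvalues i| ≤ R := by
  obtain ⟨C, hC⟩ := hK.exists_bound_of_continuousOn
    (hDc.matrix_mul hDc).matrix_trace.continuousOn
  refine ⟨C + 1, fun t ht i => ?_⟩
  have hsq : (D t * D t).trace = ∑ j, (((hD t).eigenvalues j ^ 2 : ℝ) : ℂ) := by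
    rw [← pow_two, ← cfc_pow_id (R := ℝ) (D t) 2 (hD t).isSelfAdjoint, (hD t).trace_cfc]
  have hle : (hD t).eigenvalues i ^ 2 ≤ C := by
    calc _ ≤ ∑ j, (hD t).eigenvalues j ^ 2 :=
          Finset.single_le_sum (fun j _ => sq_nonneg _) (Finset.mem_univ i)
      _ = ‖(D t * D t).trace‖ := by
          rw [hsq, ← Complex.ofReal_sum, Complex.norm_real, Real.norm_of_nonneg
            (Finset.sum_nonneg fun j _ => sq_nonneg _)]
      _ ≤ C := hC t ht
  nlinarith [abs_nonneg ((hD t).eigenvalues i), sq_abs ((hD t).eigenvalues i)]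

theorem TendstoLocallyUniformly.trace_mul_cfc {κ : Type*} {l : Filter κ} {F : κ → ℝ → ℝ}
    {f : ℝ → ℝ} (hF : TendstoLocallyUniformly F f l) (hD : ∀ t, (D t).IsHermitian)
    (hDc : Continuous D) {A : ℝ → Matrix ι ι ℂ} (hA : Continuous A) :
    TendstoLocallyUniformly (fun k t => (A t * cfc (F k) (D t)).trace)
      (fun t => (A t * cfc f (D t)).trace) l := by
  rw [tendstoLocallyUniformly_iff_forall_isCompact] at hF ⊢
  intro K hK
  obtain ⟨R, hR⟩ := hK.exists_forall_abs_eigenvalues_le hD hDc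
  obtain ⟨C, hC⟩ := hK.exists_bound_of_continuousOn (f := fun t => ∑ i, ∑ j, ‖A t i j‖)
    (by fun_prop)
  refine Metric.tendstoUniformlyOn_iff.mpr fun ε hε => ?_
  set δ := ε / (Fintype.card ι * |C| + 1)
  have hδ : 0 < δ := by positivity
  filter_upwards [Metric.tendstoUniformlyOn_iff.mp (hF _ isCompact_Icc) δ hδ] with k hk t ht
  have hcfc : ∀ i j, ‖cfc (fun x => f x - F k x) (D t) i j‖ ≤ Fintype.card ι * δ :=
    (hD t).norm_cfc_apply_le fun i => (hk _ (abs_le.mp (hR t ht i))).le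
  rw [dist_eq_norm, ← trace_sub, ← mul_sub, ← cfc_sub _ _ _ (finite_real_spectrum.continuousOn f)
    (finite_real_spectrum.continuousOn (F k))]
  have hAC : ∑ i, ∑ j, ‖A t i j‖ ≤ |C| :=
    (Real.le_norm_self _).trans ((hC t ht).trans (le_abs_self C))
  calc _ ≤ (∑ i, ∑ j, ‖A t i j‖) * (Fintype.card ι * δ) := norm_trace_mul_le hcfc
    _ ≤ |C| * (Fintype.card ι * δ) := by gcongr
    _ < (Fintype.card ι * |C| + 1) * δ := by linarith
    _ = ε := mul_div_cancel₀ ε (by positivity)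

theorem continuous_trace_mul_cfc (hD : ∀ t, (D t).IsHermitian) (hDc : Continuous D)
    {A : ℝ → Matrix ι ι ℂ} (hA : Continuous A) {f : ℝ → ℝ} (hf : Continuous f) :
    Continuous fun t => (A t * cfc f (D t)).trace := by
  obtain ⟨p, hp⟩ := exists_polynomial_tendstoLocallyUniformly hf
  refine (hp.trace_mul_cfc hD hDc hA).continuous (Frequently.of_forall fun k => ?_)
  simp only [fun t => cfc_polynomial (p k) (D t) (hD t).isSelfAdjoint]
  exact (hA.matrix_mul ((p k).continuous_aeval.comp hDc)).matrix_trace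

theorem hasDerivAt_trace_cfc_s0 {D' : ℝ → Matrix ι ι ℂ} (hD : ∀ t, (D t).IsHermitian)
    (hderiv : ∀ t, HasDerivAt D (D' t) t) (hD'c : Continuous D') {h H : ℝ → ℝ}
    (hh : Continuous h) (hH : ∀ x, HasDerivAt H (h x) x) (t : ℝ) :
    HasDerivAt (fun s => (cfc H (D s)).trace) (D' t * cfc h (D t)).trace t := by
  have hDc : Continuous D := continuous_iff_continuousAt.mpr fun s => (hderiv s).continuousAt
  obtain ⟨p, hp⟩ := exists_polynomial_tendstoLocallyUniformly hh
  choose P hP using fun k => (p k).exists_derivative_eq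
  set Q : ℕ → ℝ[X] := fun k => P k + C (H 0 - (P k).eval 0)
  have hQ (k : ℕ) : derivative (Q k) = p k := by simp [Q, hP]
  have hQH (x : ℝ) : Tendsto (fun k => (Q k).eval x) atTop (𝓝 (H x)) :=
    hp.tendsto_of_hasDerivAt (fun k y => hQ k ▸ (Q k).hasDerivAt y) hH (fun k => by simp [Q]) x
  refine hasDerivAt_of_tendstoLocallyUniformlyOn (f := fun k s => (cfc (Q k).eval (D s)).trace)
    isOpen_univ
    (tendstoLocallyUniformlyOn_univ.mpr (hp.trace_mul_cfc hD hDc hD'c))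
    (Eventually.of_forall fun k s _ => ?_) (fun s _ => ?_) (Set.mem_univ t)
  · have hcfc (q : ℝ[X]) (r : ℝ) : cfc (fun x => q.eval x) (D r) = aeval (D r) q :=
      cfc_polynomial q (D r) (hD r).isSelfAdjoint
    simp only [hcfc, ← hQ k]
    exact (hderiv s).matrix_trace_aeval (Q k)
  · simp only [(hD s).trace_cfc]
    exact tendsto_finsetSum _ fun i _ => (Complex.continuous_ofReal.tendsto _).comp (hQH _)

theorem integral_trace_mul_cfc {D' : ℝ → Matrix ι ι ℂ} (hD : ∀ t, (D t).IsHermitian)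
    (hderiv : ∀ t, HasDerivAt D (D' t) t) (hD'c : Continuous D') {h H : ℝ → ℝ}
    (hh : Continuous h) (hH : ∀ x, HasDerivAt H (h x) x) (a b : ℝ) :
    ∫ t in a..b, (D' t * cfc h (D t)).trace = (cfc H (D b)).trace - (cfc H (D a)).trace :=
  intervalIntegral.integral_eq_sub_of_hasDerivAt
    (fun t _ => hasDerivAt_trace_cfc_s0 hD hderiv hD'c hh hH t)
    ((continuous_trace_mul_cfc hD (continuous_iff_continuousAt.mpr fun s =>
      (hderiv s).continuousAt) hD'c hh).intervalIntegrable a b)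

end PathOfHermitian

theorem spectral_flow_formula_finite_dim_general
    (n : ℕ)
    (D : ℝ → Matrix (Fin n) (Fin n) ℂ)
    (hD : ∀ t, (D t).IsHermitian)
    (D' : ℝ → Matrix (Fin n) (Fin n) ℂ)
    (hderiv : ∀ t, HasDerivAt D (D' t) t)
    (hD'cont : Continuous D')
    (hD0 : IsUnit (D 0)) (hD1 : IsUnit (D 1))
    (h : ℝ → ℝ) (hh : Continuous h)
    (H : ℝ → ℝ) (hH : ∀ x, HasDerivAt H (h x) x) :
    -- all the traces appearing are real numbers
    (∀ t : ℝ, ((D' t * cfc h (D t)).trace).im = 0) ∧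
    ((cfc H (D 0)).trace).im = 0 ∧ ((cfc H (D 1)).trace).im = 0 ∧
    ((cfc Real.sign (D 0)).trace).im = 0 ∧ ((cfc Real.sign (D 1)).trace).im = 0 ∧
    -- the spectral flow formula
    ((negEigCount (hD 0) : ℝ) - negEigCount (hD 1) =
      (∫ t in (0:ℝ)..1, ((D' t * cfc h (D t)).trace).re)
        + ((cfc H (D 0)).trace).re - ((cfc H (D 1)).trace).re
        + (1/2) * (((cfc Real.sign (D 1)).trace).re - ((cfc Real.sign (D 0)).trace).re)) := by
  have him (t : ℝ) : ((D' t * cfc h (D t)).trace).im = 0 :=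
    (isHermitian_of_hasDerivAt hD (hderiv t)).im_trace_mul (cfc_predicate h (D t))
  refine ⟨him, (hD 0).im_trace_cfc H, (hD 1).im_trace_cfc H, (hD 0).im_trace_cfc _,
    (hD 1).im_trace_cfc _, ?_⟩
  have hreal : (fun t => (D' t * cfc h (D t)).trace)
      = fun t => ((D' t * cfc h (D t)).trace.re : ℂ) :=
    funext fun t => Complex.ext rfl (by simp [him t])
  have hint : ∫ t in (0:ℝ)..1, ((D' t * cfc h (D t)).trace).re
      = ((cfc H (D 1)).trace - (cfc H (D 0)).trace).re := by
    rw [← integral_trace_mul_cfc hD hderiv hD'cont hh hH, hreal, intervalIntegral.integral_ofReal,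
      Complex.ofReal_re]
  rw [hint, (hD 0).trace_cfc_sign hD0, (hD 1).trace_cfc_sign hD1]
  simp only [Complex.sub_re, Complex.mul_re, Complex.natCast_re, Complex.natCast_im,
    Complex.re_ofNat, Complex.im_ofNat]
  ring

theorem spectral_flow_formula_finite_dim
    (n : ℕ) (hn : 1 ≤ n)
    (D : ℝ → Matrix (Fin n) (Fin n) ℂ)
    (hD : ∀ t, (D t).IsHermitian)
    (D' : ℝ → Matrix (Fin n) (Fin n) ℂ)
    (hderiv : ∀ t, HasDerivAt D (D' t) t)
    (hD'cont : Continuous D')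
    (hD0 : IsUnit (D 0)) (hD1 : IsUnit (D 1))
    (h : ℝ → ℝ) (hh : Continuous h)
    (H : ℝ → ℝ) (hH : ∀ x, HasDerivAt H (h x) x) :
    -- all the traces appearing are real numbers
    (∀ t : ℝ, ((D' t * cfc h (D t)).trace).im = 0) ∧
    ((cfc H (D 0)).trace).im = 0 ∧ ((cfc H (D 1)).trace).im = 0 ∧
    ((cfc Real.sign (D 0)).trace).im = 0 ∧ ((cfc Real.sign (D 1)).trace).im = 0 ∧
    -- the spectral flow formula
    ((negEigCount (hD 0) : ℝ) - negEigCount (hD 1) =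
      (∫ t in (0:ℝ)..1, ((D' t * cfc h (D t)).trace).re)
        + ((cfc H (D 0)).trace).re - ((cfc H (D 1)).trace).re
        + (1/2) * (((cfc Real.sign (D 1)).trace).re - ((cfc Real.sign (D 0)).trace).re)) :=
  spectral_flow_formula_finite_dim_general n D hD D' hderiv hD'cont hD0 hD1 h hh H hH
end

section
/- Let n ≥ 1, let D : ℝ → M_n(ℂ) be a continuously differentiable path of Hermitian matrices, and let f : ℝ → ℝ be continuously differentiable. Then the function t ↦ tr(f(D(t))) is differentiable on ℝ, and its derivative at every t equals tr(D′(t)·f′(D(t))). -/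
/-!
Write `a`, `b` for the eigenvalues of Hermitian matrices `A`, `B` and `w i j = |⟨uᵢ, vⱼ⟩|²` for
the squared overlaps of their eigenvectors. Expanding both matrices in their eigenbases gives
`tr (g A * h B) = ∑ w i j * g (a i) * h (b j)`, so that the first-order remainder
`tr f(B) - tr f(A) - tr ((B - A) f'(A))` equals
`∑ w i j * (f (b j) - f (a i) - (b j - a i) f'(a i))`.
Uniform continuity of `f'` on a compact interval containing both spectra bounds each scalar
remainder by `(ε + K |b j - a i|) |b j - a i|`, and the weighted sums `∑ w |b - a|` and
`∑ w (b - a)²` are controlled by `‖B - A‖` because `∑ w (b - a)² = tr ((B - A)²)`. Hence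
`B ↦ tr f(B)` is differentiable along Hermitian matrices, and the chain rule along `D` finishes.
-/

attribute [local instance] Matrix.normedAddCommGroup Matrix.normedSpace

open Matrix Finset Filter Topology Asymptotics

open Set in
theorem ContDiff.exists_abs_sub_sub_mul_deriv_le {f : ℝ → ℝ} (hf : ContDiff ℝ 1 f)
    {s : Set ℝ} (hs : IsCompact s) (hconv : Convex ℝ s) {ε : ℝ} (hε : 0 < ε) :
    ∃ K, 0 ≤ K ∧ ∀ x ∈ s, ∀ y ∈ s,
      |f y - f x - (y - x) * deriv f x| ≤ (ε + K * |y - x|) * |y - x| := by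
  have hf' : Continuous (deriv f) := hf.continuous_deriv le_rfl
  obtain ⟨M, hM⟩ := hs.exists_bound_of_continuousOn hf'.continuousOn
  obtain ⟨δ, hδ, hδε⟩ := Metric.uniformContinuousOn_iff.1
    (hs.uniformContinuousOn_of_continuous hf'.continuousOn) ε hε
  refine ⟨2 * |M| / δ, by positivity, fun x hx y hy => ?_⟩
  have hxy : uIcc x y ⊆ s := hconv.segment_subset hx hy |>.trans' (segment_eq_uIcc x y).ge
  have hderiv (z : ℝ) (hz : z ∈ uIcc x y) :
      ‖deriv (fun z => f z - z * deriv f x) z‖ ≤ ε + 2 * |M| / δ * |y - x| := by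
    have hd : deriv (fun z => f z - z * deriv f x) z = deriv f z - deriv f x := by
      have h := (hf.differentiable one_ne_zero z).hasDerivAt.sub
        ((hasDerivAt_id' z).mul_const (deriv f x))
      rw [one_mul] at h
      exact h.deriv
    rw [hd]
    by_cases hzx : |z - x| < δ
    · have hclose := hδε z (hxy hz) x hx (by rwa [Real.dist_eq])
      rw [Real.dist_eq] at hclose
      have hK : 0 ≤ 2 * |M| / δ * |y - x| := by positivity
      rw [Real.norm_eq_abs]
      linarith
    · have hδyx : δ ≤ |y - x| := (not_lt.1 hzx).trans (abs_sub_left_of_mem_uIcc hz)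
      calc ‖deriv f z - deriv f x‖ ≤ ‖deriv f z‖ + ‖deriv f x‖ := norm_sub_le _ _
        _ ≤ 2 * |M| := by linarith [hM z (hxy hz), hM x hx, le_abs_self M]
        _ = 2 * |M| / δ * δ := by field_simp
        _ ≤ 2 * |M| / δ * |y - x| := by gcongr
        _ ≤ ε + 2 * |M| / δ * |y - x| := le_add_of_nonneg_left hε.le
  have hmvt := Convex.norm_image_sub_le_of_norm_deriv_le (f := fun z => f z - z * deriv f x)
    (fun z _ => ((hf.differentiable one_ne_zero) z).sub (differentiableAt_id.mul_const _))
    hderiv (convex_uIcc x y) left_mem_uIcc right_mem_uIcc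
  simp only [Real.norm_eq_abs] at hmvt
  convert hmvt using 2
  ring

variable {ι : Type*} [Fintype ι]

theorem Matrix.norm_trace_mul_le_s2 {R : Type*} [NormedRing R] (M N : Matrix ι ι R) :
    ‖(M * N).trace‖ ≤ Fintype.card ι ^ 2 * (‖M‖ * ‖N‖) :=
  calc ‖(M * N).trace‖ = ‖∑ p : ι × ι, M p.1 p.2 * N p.2 p.1‖ := by
        simp [trace, mul_apply, Fintype.sum_prod_type]
    _ ≤ ∑ p : ι × ι, ‖M p.1 p.2 * N p.2 p.1‖ := norm_sum_le _ _
    _ ≤ ∑ _p : ι × ι, ‖M‖ * ‖N‖ := Finset.sum_le_sum fun _ _ =>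
        (norm_mul_le _ _).trans <| mul_le_mul (norm_entry_le_entrywise_sup_norm M)
          (norm_entry_le_entrywise_sup_norm N) (norm_nonneg _) (norm_nonneg _)
    _ = Fintype.card ι ^ 2 * (‖M‖ * ‖N‖) := by simp [sq]

variable [DecidableEq ι]

theorem Matrix.trace_diagonal_mul_mul_diagonal_mul_star (d e : ι → ℂ) (W : Matrix ι ι ℂ) :
    (diagonal d * W * diagonal e * star W).trace =
      ∑ p : ι × ι, (Complex.normSq (W p.1 p.2) : ℂ) * d p.1 * e p.2 := by
  have entry (i j : ι) : (diagonal d * W * diagonal e) i j = d i * W i j * e j := by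
    simp [mul_diagonal, diagonal_mul]
  simp only [Matrix.trace, diag_apply, mul_apply, entry, star_apply, Fintype.sum_prod_type,
    ← Complex.mul_conj, RCLike.star_def]
  refine Finset.sum_congr rfl fun i _ => Finset.sum_congr rfl fun j _ => ?_
  ring

namespace Matrix.IsHermitian

variable {A B : Matrix ι ι ℂ}

noncomputable def eigenvectorOverlap (hA : A.IsHermitian) (hB : B.IsHermitian) (i j : ι) : ℝ :=
  Complex.normSq ((star (hA.eigenvectorUnitary : Matrix ι ι ℂ) * hB.eigenvectorUnitary) i j)

theorem trace_cfc_mul_cfc (hA : A.IsHermitian) (hB : B.IsHermitian) (g h : ℝ → ℝ) :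
    (cfc g A * cfc h B).trace = ((∑ p : ι × ι, hA.eigenvectorOverlap hB p.1 p.2 *
      g (hA.eigenvalues p.1) * h (hB.eigenvalues p.2) : ℝ) : ℂ) := by
  set U : Matrix ι ι ℂ := ↑hA.eigenvectorUnitary
  set V : Matrix ι ι ℂ := ↑hB.eigenvectorUnitary
  have key : cfc g A * cfc h B = U * (diagonal (RCLike.ofReal ∘ g ∘ hA.eigenvalues) *
      (star U * V) * diagonal (RCLike.ofReal ∘ h ∘ hB.eigenvalues) * star V) := by
    rw [hA.cfc_eq, hB.cfc_eq, IsHermitian.cfc, IsHermitian.cfc, Unitary.conjStarAlgAut_apply,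
      Unitary.conjStarAlgAut_apply]
    simp only [Matrix.mul_assoc]; rfl
  rw [key, trace_mul_comm, Matrix.mul_assoc _ (star V), ← star_star U, ← star_mul, star_star,
    trace_diagonal_mul_mul_diagonal_mul_star]
  push_cast
  rfl

theorem eigenvectorOverlap_nonneg (hA : A.IsHermitian) (hB : B.IsHermitian) (i j : ι) :
    0 ≤ hA.eigenvectorOverlap hB i j :=
  Complex.normSq_nonneg _

theorem sum_eigenvectorOverlap (hA : A.IsHermitian) (hB : B.IsHermitian) :
    ∑ p : ι × ι, hA.eigenvectorOverlap hB p.1 p.2 = Fintype.card ι := by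
  have h := hA.trace_cfc_mul_cfc hB 1 1
  rw [cfc_one ℝ A, cfc_one ℝ B, Matrix.one_mul, trace_one] at h
  simp only [Pi.one_apply, mul_one] at h
  exact_mod_cast h.symm

theorem trace_cfc_sub_sub_eq (hA : A.IsHermitian) (hB : B.IsHermitian) (f g : ℝ → ℝ) :
    (cfc f B).trace - (cfc f A).trace - ((B - A) * cfc g A).trace =
      ((∑ p : ι × ι, hA.eigenvectorOverlap hB p.1 p.2 *
        (f (hB.eigenvalues p.2) - f (hA.eigenvalues p.1) -
          (hB.eigenvalues p.2 - hA.eigenvalues p.1) * g (hA.eigenvalues p.1)) : ℝ) : ℂ) := by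
  have hfB := hA.trace_cfc_mul_cfc hB 1 f
  have hfA := hA.trace_cfc_mul_cfc hB f 1
  have hgB := hA.trace_cfc_mul_cfc hB g id
  have hgA := hA.trace_cfc_mul_cfc hB (fun x => x * g x) 1
  rw [cfc_one ℝ A, Matrix.one_mul] at hfB
  rw [cfc_one ℝ B, Matrix.mul_one] at hfA
  rw [cfc_id ℝ B, trace_mul_comm] at hgB
  rw [cfc_one ℝ B, Matrix.mul_one, cfc_mul (fun x => x) g A continuousOn_id
    (A.finite_real_spectrum.continuousOn g), cfc_id' ℝ A] at hgA
  rw [sub_mul, trace_sub, hfB, hfA, hgB, hgA]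
  push_cast
  simp only [← Finset.sum_sub_distrib]
  refine Finset.sum_congr rfl fun p _ => ?_
  simp only [Pi.one_apply, id, Complex.ofReal_one, mul_one]
  ring

theorem trace_sub_mul_sub_eq (hA : A.IsHermitian) (hB : B.IsHermitian) :
    ((B - A) * (B - A)).trace = ((∑ p : ι × ι, hA.eigenvectorOverlap hB p.1 p.2 *
      (hB.eigenvalues p.2 - hA.eigenvalues p.1) ^ 2 : ℝ) : ℂ) := by
  have h := hA.trace_cfc_sub_sub_eq hB (fun x => x ^ 2) (fun x => 2 * x)
  rw [cfc_pow_id B 2, cfc_pow_id A 2, cfc_const_mul_id (2 : ℝ) A] at h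
  convert h using 1
  · simp only [sq, two_smul, sub_mul, mul_sub, mul_add, trace_sub, trace_add, trace_mul_comm A B]
    ring
  · congr 1
    exact Finset.sum_congr rfl fun p _ => by ring

theorem sum_eigenvectorOverlap_mul_sq_le (hA : A.IsHermitian) (hB : B.IsHermitian) :
    ∑ p : ι × ι, hA.eigenvectorOverlap hB p.1 p.2 *
      (hB.eigenvalues p.2 - hA.eigenvalues p.1) ^ 2 ≤ Fintype.card ι ^ 2 * ‖B - A‖ ^ 2 := by
  have h := norm_trace_mul_le_s2 (B - A) (B - A)
  rw [hA.trace_sub_mul_sub_eq hB, Complex.norm_real, Real.norm_eq_abs, ← sq] at h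
  exact (le_abs_self _).trans h

theorem sum_eigenvectorOverlap_mul_abs_le (hA : A.IsHermitian) (hB : B.IsHermitian) :
    ∑ p : ι × ι, hA.eigenvectorOverlap hB p.1 p.2 * |hB.eigenvalues p.2 - hA.eigenvalues p.1|
      ≤ Fintype.card ι ^ 2 * ‖B - A‖ := by
  have hcs := Finset.sum_sq_le_sum_mul_sum_of_sq_le_mul Finset.univ
    (r := fun p : ι × ι => hA.eigenvectorOverlap hB p.1 p.2 *
      |hB.eigenvalues p.2 - hA.eigenvalues p.1|)
    (g := fun p : ι × ι => hA.eigenvectorOverlap hB p.1 p.2 *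
      (hB.eigenvalues p.2 - hA.eigenvalues p.1) ^ 2)
    (fun p _ => hA.eigenvectorOverlap_nonneg hB p.1 p.2)
    (fun p _ => mul_nonneg (hA.eigenvectorOverlap_nonneg hB p.1 p.2) (sq_nonneg _))
    (fun p _ => by rw [mul_pow, sq_abs]; exact le_of_eq (by ring))
  rw [hA.sum_eigenvectorOverlap hB] at hcs
  have hN : (Fintype.card ι : ℝ) ^ 3 ≤ (Fintype.card ι : ℝ) ^ 4 := by
    rcases Nat.eq_zero_or_pos (Fintype.card ι) with h | h
    · simp [h]
    · exact pow_le_pow_right₀ (by exact_mod_cast h) (by norm_num)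
  refine abs_le_of_sq_le_sq' ?_ (by positivity) |>.2
  calc _ ≤ _ := hcs
    _ ≤ (Fintype.card ι : ℝ) * (Fintype.card ι ^ 2 * ‖B - A‖ ^ 2) :=
        mul_le_mul_of_nonneg_left (hA.sum_eigenvectorOverlap_mul_sq_le hB) (by positivity)
    _ ≤ (Fintype.card ι ^ 2 * ‖B - A‖) ^ 2 := by
        nlinarith [sq_nonneg ‖B - A‖]

theorem norm_trace_cfc_sub_sub_le (hA : A.IsHermitian) (hB : B.IsHermitian) {f g : ℝ → ℝ}
    {ε K : ℝ} (hε : 0 ≤ ε) (hK : 0 ≤ K)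
    (hfg : ∀ i j, |f (hB.eigenvalues j) - f (hA.eigenvalues i) -
      (hB.eigenvalues j - hA.eigenvalues i) * g (hA.eigenvalues i)| ≤
        (ε + K * |hB.eigenvalues j - hA.eigenvalues i|) *
          |hB.eigenvalues j - hA.eigenvalues i|) :
    ‖(cfc f B).trace - (cfc f A).trace - ((B - A) * cfc g A).trace‖ ≤
      Fintype.card ι ^ 2 * (ε + K * ‖B - A‖) * ‖B - A‖ := by
  have hT := hA.sum_eigenvectorOverlap_mul_abs_le hB
  have hS := hA.sum_eigenvectorOverlap_mul_sq_le hB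
  rw [hA.trace_cfc_sub_sub_eq hB, Complex.norm_real, Real.norm_eq_abs]
  set a := hA.eigenvalues
  set b := hB.eigenvalues
  set w := hA.eigenvectorOverlap hB
  have hw (p : ι × ι) : 0 ≤ w p.1 p.2 := hA.eigenvectorOverlap_nonneg hB p.1 p.2
  calc _ ≤ ∑ p : ι × ι, |w p.1 p.2 * (f (b p.2) - f (a p.1) - (b p.2 - a p.1) * g (a p.1))| :=
        Finset.abs_sum_le_sum_abs _ _
    _ ≤ ∑ p : ι × ι,
          (ε * (w p.1 p.2 * |b p.2 - a p.1|) + K * (w p.1 p.2 * (b p.2 - a p.1) ^ 2)) :=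
        Finset.sum_le_sum fun p _ => by
          rw [abs_mul, abs_of_nonneg (hw p), ← sq_abs]
          nlinarith [mul_le_mul_of_nonneg_left (hfg p.1 p.2) (hw p)]
    _ ≤ ε * (Fintype.card ι ^ 2 * ‖B - A‖) + K * (Fintype.card ι ^ 2 * ‖B - A‖ ^ 2) := by
        rw [Finset.sum_add_distrib, ← Finset.mul_sum, ← Finset.mul_sum]
        gcongr
    _ = Fintype.card ι ^ 2 * (ε + K * ‖B - A‖) * ‖B - A‖ := by ring

theorem trace_cfc_s2 (hA : A.IsHermitian) (g : ℝ → ℝ) :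
    (cfc g A).trace = ∑ i, (g (hA.eigenvalues i) : ℂ) := by
  rw [hA.cfc_eq, IsHermitian.cfc, Unitary.conjStarAlgAut_apply, trace_mul_cycle,
    Unitary.coe_star_mul_self, Matrix.one_mul, trace_diagonal]
  rfl

theorem abs_eigenvalues_le (hA : A.IsHermitian) (i : ι) :
    |hA.eigenvalues i| ≤ Fintype.card ι * ‖A‖ := by
  have h := norm_trace_mul_le_s2 A A
  rw [← sq, ← cfc_pow_id (R := ℝ) A 2, hA.trace_cfc_s2, ← Complex.ofReal_sum, Complex.norm_real,
    Real.norm_eq_abs, abs_of_nonneg (Finset.sum_nonneg fun j _ => sq_nonneg _)] at h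
  refine abs_le_of_sq_le_sq ?_ (by positivity)
  calc hA.eigenvalues i ^ 2 ≤ ∑ j, hA.eigenvalues j ^ 2 :=
        Finset.single_le_sum (fun j _ => sq_nonneg (hA.eigenvalues j)) (Finset.mem_univ i)
    _ ≤ _ := h.trans_eq (by ring)

theorem isLittleO_trace_cfc_sub_sub {f : ℝ → ℝ} (hf : ContDiff ℝ 1 f) (hA : A.IsHermitian) :
    (fun B => (cfc f B).trace - (cfc f A).trace - ((B - A) * cfc (deriv f) A).trace)
      =o[𝓝[{B | B.IsHermitian}] A] (fun B => B - A) := by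
  rw [isLittleO_iff]
  intro c hc
  set N : ℝ := (Fintype.card ι : ℝ)
  set R := N * (‖A‖ + 1)
  obtain ⟨ε, hε, hεc⟩ := exists_pos_mul_lt (half_pos hc) (N ^ 2)
  obtain ⟨K, hK, hfK⟩ := hf.exists_abs_sub_sub_mul_deriv_le (isCompact_Icc (a := -R) (b := R))
    (convex_Icc _ _) hε
  obtain ⟨η, hη, hηc⟩ := exists_pos_mul_lt (half_pos hc) (N ^ 2 * K)
  have hball : Metric.ball A (min 1 η) ∈ 𝓝 A := Metric.ball_mem_nhds A (lt_min one_pos hη)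
  filter_upwards [self_mem_nhdsWithin, mem_nhdsWithin_of_mem_nhds hball] with B hB hBA
  rw [Metric.mem_ball, dist_eq_norm, lt_min_iff] at hBA
  have heig {C : Matrix ι ι ℂ} (hC : C.IsHermitian) (hCA : ‖C‖ ≤ ‖A‖ + 1) (i : ι) :
      hC.eigenvalues i ∈ Set.Icc (-R) R :=
    abs_le.1 <| (hC.abs_eigenvalues_le i).trans <|
      mul_le_mul_of_nonneg_left hCA (Nat.cast_nonneg _)
  have hBnorm : ‖B‖ ≤ ‖A‖ + 1 := by linarith [norm_le_norm_add_norm_sub' B A]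
  refine (hA.norm_trace_cfc_sub_sub_le hB hε.le hK fun i j =>
    hfK _ (heig hA (by linarith) i) _ (heig hB hBnorm j)).trans ?_
  refine mul_le_mul_of_nonneg_right ?_ (norm_nonneg _)
  have : N ^ 2 * K * ‖B - A‖ ≤ N ^ 2 * K * η := by gcongr; exact hBA.2.le
  nlinarith

end Matrix.IsHermitian

theorem hasDerivAt_trace_cfc_general
    (n : ℕ)
    (D : ℝ → Matrix (Fin n) (Fin n) ℂ)
    (hD : ∀ t, (D t).IsHermitian)
    (D' : ℝ → Matrix (Fin n) (Fin n) ℂ)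
    (hderiv : ∀ t, HasDerivAt D (D' t) t)
    (f : ℝ → ℝ) (hf : ContDiff ℝ 1 f) :
    ∀ t : ℝ, HasDerivAt (fun s => (cfc f (D s)).trace)
      ((D' t * cfc (deriv f) (D t)).trace) t := by
  intro t
  set C := cfc (deriv f) (D t)
  let L : Matrix (Fin n) (Fin n) ℂ →L[ℝ] ℂ := LinearMap.toContinuousLinearMap
    ((traceLinearMap (Fin n) ℝ ℂ).comp (LinearMap.mulRight ℝ C))
  have hlin : HasDerivAt (fun s => (D s * C).trace) (D' t * C).trace t :=
    L.hasFDerivAt.comp_hasDerivAt t (hderiv t)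
  have hDherm : Tendsto D (𝓝 t) (𝓝[{B | B.IsHermitian}] (D t)) :=
    tendsto_nhdsWithin_iff.2 ⟨(hderiv t).continuousAt, Eventually.of_forall hD⟩
  have hrem : HasDerivAt (fun s => (cfc f (D s)).trace - (D s * C).trace) 0 t := by
    rw [hasDerivAt_iff_isLittleO]
    refine ((((hD t).isLittleO_trace_cfc_sub_sub hf).comp_tendsto hDherm).trans_isBigO
      (hderiv t).isBigO_sub).congr_left fun s => ?_
    simp only [sub_mul, trace_sub, Function.comp_apply, smul_zero, sub_zero]
    ring
  simpa only [Pi.add_def, sub_add_cancel, zero_add] using hrem.add hlin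

theorem hasDerivAt_trace_cfc
    (n : ℕ) (hn : 1 ≤ n)
    (D : ℝ → Matrix (Fin n) (Fin n) ℂ)
    (hD : ∀ t, (D t).IsHermitian)
    (D' : ℝ → Matrix (Fin n) (Fin n) ℂ)
    (hderiv : ∀ t, HasDerivAt D (D' t) t)
    (hD'cont : Continuous D')
    (f : ℝ → ℝ) (hf : ContDiff ℝ 1 f) :
    ∀ t : ℝ, HasDerivAt (fun s => (cfc f (D s)).trace)
      ((D' t * cfc (deriv f) (D t)).trace) t :=
  hasDerivAt_trace_cfc_general n D hD D' hderiv f hf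
end

section
/- Let H be a complex Hilbert space and let F ∈ B(H) be self-adjoint with ‖F‖ ≤ 1 and with 1 − F² compact. Then for every continuous function g : ℝ → ℝ with g(−1) = g(1) = 0, the operator g(F), given by continuous functional calculus, is compact. -/
/-!
Since `1 - F²` is compact and the compact operators form a closed left ideal, it suffices to
approximate `g` uniformly on the spectrum of `F` by functions `q · (1 - x²)`. The zeros of
`1 - x²` are `±1`, where `g` vanishes; by compactness of the spectrum `|g| < ε` wherever
`|1 - x²|` is small, and `q = g p / max(p², δ²)` with `p = 1 - x²` does the job.
-/

open Set

theorem IsCompact.exists_pos_forall_abs_lt {X : Type*} [TopologicalSpace X] [T2Space X]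
    {K : Set X} (hK : IsCompact K) {p g : X → ℝ} (hp : ContinuousOn p K) (hg : ContinuousOn g K)
    (hpg : ∀ x ∈ K, p x = 0 → g x = 0) {ε : ℝ} (hε : 0 < ε) :
    ∃ δ > 0, ∀ x ∈ K, |p x| < δ → |g x| < ε := by
  set L := K ∩ g ⁻¹' {y | ε ≤ |y|}
  have hL : IsCompact L := hK.of_isClosed_subset
    (hg.preimage_isClosed_of_isClosed hK.isClosed (isClosed_le continuous_const continuous_abs))
    inter_subset_left
  rcases L.eq_empty_or_nonempty with hL₀ | hLne
  · refine ⟨1, one_pos, fun x hx _ ↦ not_le.1 fun hgx ↦ ?_⟩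
    exact hL₀.subset ⟨hx, hgx⟩
  obtain ⟨x₀, ⟨hx₀, hgx₀⟩, hmin⟩ := hL.exists_isMinOn hLne (hp.abs.mono inter_subset_left)
  refine ⟨|p x₀|, abs_pos.2 fun hpx₀ ↦ ?_, fun x hx hpx ↦ not_le.1 fun hgx ↦ ?_⟩
  · simp only [mem_ofPred_eq, mem_preimage, hpg x₀ hx₀ hpx₀, abs_zero] at hgx₀
    exact hε.not_ge hgx₀
  · exact (hmin ⟨hx, hgx⟩).not_gt hpx

theorem IsCompact.exists_continuousOn_abs_sub_mul_le {X : Type*} [TopologicalSpace X]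
    [T2Space X] {K : Set X} (hK : IsCompact K) {p g : X → ℝ} (hp : ContinuousOn p K)
    (hg : ContinuousOn g K) (hpg : ∀ x ∈ K, p x = 0 → g x = 0) {ε : ℝ} (hε : 0 < ε) :
    ∃ q : X → ℝ, ContinuousOn q K ∧ ∀ x ∈ K, |g x - q x * p x| ≤ ε := by
  obtain ⟨δ, hδ, hgε⟩ := hK.exists_pos_forall_abs_lt hp hg hpg hε
  have hm : ∀ x, 0 < max (p x ^ 2) (δ ^ 2) := fun x ↦ lt_max_of_lt_right (by positivity)
  refine ⟨fun x ↦ g x * p x / max (p x ^ 2) (δ ^ 2),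
    (hg.mul hp).div ((hp.pow 2).sup continuousOn_const) fun x _ ↦ (hm x).ne', fun x hx ↦ ?_⟩
  rw [show g x - g x * p x / max (p x ^ 2) (δ ^ 2) * p x
      = g x * (1 - p x ^ 2 / max (p x ^ 2) (δ ^ 2)) by ring, abs_mul]
  rcases lt_or_ge |p x| δ with hpx | hpx
  · have hratio : 0 ≤ p x ^ 2 / max (p x ^ 2) (δ ^ 2) ∧ p x ^ 2 / max (p x ^ 2) (δ ^ 2) ≤ 1 :=
      ⟨by positivity, div_le_one_of_le₀ (le_max_left _ _) (hm x).le⟩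
    calc |g x| * |1 - p x ^ 2 / max (p x ^ 2) (δ ^ 2)| ≤ ε * 1 := by
          gcongr
          · exact (hgε x hx hpx).le
          · exact abs_le.2 ⟨by linarith, by linarith⟩
      _ = ε := mul_one ε
  · have hmax : max (p x ^ 2) (δ ^ 2) = p x ^ 2 :=
      max_eq_left (sq_le_sq.2 (by rwa [abs_of_pos hδ]))
    have hpx₀ : p x ^ 2 ≠ 0 := pow_ne_zero 2 (abs_pos.1 (hδ.trans_le hpx))
    rw [hmax, div_self hpx₀, sub_self, abs_zero, mul_zero]
    exact hε.le

theorem Ideal.cfc_mem_of_cfc_mem {A : Type*} [NormedRing A] [StarRing A] [NormedAlgebra ℝ A]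
    [IsometricContinuousFunctionalCalculus ℝ A IsSelfAdjoint] {I : Ideal A}
    (hI : IsClosed (I : Set A)) {a : A} {p g : ℝ → ℝ} (hp : ContinuousOn p (spectrum ℝ a))
    (hg : ContinuousOn g (spectrum ℝ a)) (hpg : ∀ x ∈ spectrum ℝ a, p x = 0 → g x = 0)
    (hpI : cfc p a ∈ I) : cfc g a ∈ I := by
  refine hI.closure_subset (Metric.mem_closure_iff.2 fun ε hε ↦ ?_)
  obtain ⟨q, hq, hgq⟩ := (ContinuousFunctionalCalculus.isCompact_spectrum a)
    |>.exists_continuousOn_abs_sub_mul_le hp hg hpg (half_pos hε)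
  refine ⟨cfc q a * cfc p a, I.mul_mem_left _ hpI, ?_⟩
  rw [dist_eq_norm, ← cfc_mul q p a, ← cfc_sub g (fun x ↦ q x * p x) a]
  exact (norm_cfc_le (half_pos hε).le hgq).trans_lt (half_lt_self hε)

def compactOperatorIdeal (𝕜 E : Type*) [NormedField 𝕜] [NormedAddCommGroup E] [NormedSpace 𝕜 E] :
    Ideal (E →L[𝕜] E) where
  carrier := {T | IsCompactOperator T}
  add_mem' := IsCompactOperator.add
  zero_mem' := isCompactOperator_zero
  smul_mem' S _ hT := hT.clm_comp S

theorem isClosed_compactOperatorIdeal (𝕜 E : Type*) [NontriviallyNormedField 𝕜]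
    [NormedAddCommGroup E] [NormedSpace 𝕜 E] [CompleteSpace E] :
    IsClosed (compactOperatorIdeal 𝕜 E : Set (E →L[𝕜] E)) :=
  isClosed_setOfPred_isCompactOperator

theorem cfc_compact_of_vanishing_at_essential_spectrum_general
    (H : Type*) [NormedAddCommGroup H] [InnerProductSpace ℂ H] [CompleteSpace H]
    (F : H →L[ℂ] H) (hF : IsSelfAdjoint F)
    (hFc : IsCompactOperator ((1 - F ^ 2 : H →L[ℂ] H) : H → H))
    (g : ℝ → ℝ) (hg : Continuous g) (hgm : g (-1) = 0) (hgp : g 1 = 0) :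
    IsCompactOperator ((cfc g F : H →L[ℂ] H) : H → H) := by
  have hp : cfc (fun x : ℝ ↦ 1 - x ^ 2) F = 1 - F ^ 2 := by
    rw [cfc_sub .., cfc_const_one .., cfc_pow_id ..]
  refine (compactOperatorIdeal ℂ H).cfc_mem_of_cfc_mem (isClosed_compactOperatorIdeal ℂ H)
    (by fun_prop) hg.continuousOn (fun x _ hx ↦ ?_) (hp ▸ hFc)
  rcases sq_eq_one_iff.1 (sub_eq_zero.1 hx).symm with rfl | rfl
  exacts [hgp, hgm]

theorem cfc_compact_of_vanishing_at_essential_spectrum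
    (H : Type*) [NormedAddCommGroup H] [InnerProductSpace ℂ H] [CompleteSpace H]
    (F : H →L[ℂ] H) (hF : IsSelfAdjoint F) (hF1 : ‖F‖ ≤ 1)
    (hFc : IsCompactOperator ((1 - F ^ 2 : H →L[ℂ] H) : H → H))
    (g : ℝ → ℝ) (hg : Continuous g) (hgm : g (-1) = 0) (hgp : g 1 = 0) :
    IsCompactOperator ((cfc g F : H →L[ℂ] H) : H → H) :=
  cfc_compact_of_vanishing_at_essential_spectrum_general H F hF hFc g hg hgm hgp
end

section
/- Let H be a complex Hilbert space and let D : ℝ → B(H) be a map which is continuously differentiable with respect to the operator norm and such that D(t) is self-adjoint for every t ∈ ℝ. Let ϑ(x) = x·(1+x²)^{−1/2}. Then the map t ↦ ϑ(D(t)), defined by continuous functional calculus, is continuously differentiable with respect to the operator norm. (This is the bounded-operator instance of the paper's theorem that the map D ↦ D(1+D²)^{−1/2} sends continuously graph-norm-differentiable paths of self-adjoint operators to operator-norm C¹ paths.) -/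
/-!
Fix `t₀` and put `s = 1 + ‖D t₀‖²`. For every real `x`,
`(1 + x²)^(-1/2) = s^(-1/2) (1 + y)^(-1/2)` with `y = s⁻¹ (1 + x²) - 1`, so
`ϑ(D t) = s^(-1/2) D(t) (1 + Y t)^(-1/2)` with `Y t = s⁻¹ (1 + D(t)²) - 1`.
The spectrum of `Y t₀` lies in `[s⁻¹ - 1, 0]`, hence `‖Y t₀‖ < 1` and `‖Y t‖ < 1` near `t₀`.
Inside the unit ball the functional calculus of `(1 + y)^(-1/2)` is the binomial series
`∑ (-1/2 choose n) Yⁿ`, which is analytic in `Y`. So near `t₀` the path `ϑ(D t)` is a product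
of the `C¹` path `D` with an analytic function of the `C¹` path `Y`.
-/

open scoped NNReal ENNReal Topology
open FormalMultilinearSeries Filter

namespace FormalMultilinearSeries

theorem ofScalars_radius_eq_ofScalars_radius {𝕜 : Type*} (E F : Type*)
    [NontriviallyNormedField 𝕜] [NormedRing E] [NormedAlgebra 𝕜 E] [NormOneClass E]
    [NormedRing F] [NormedAlgebra 𝕜 F] [NormOneClass F] (c : ℕ → 𝕜) :
    (ofScalars E c).radius = (ofScalars F c).radius := by
  simp only [radius, ofScalars_norm]

theorem ofScalars_partialSum {𝕜 E : Type*} [Field 𝕜] [Ring E] [Algebra 𝕜 E]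
    [TopologicalSpace E] [IsTopologicalRing E] (c : ℕ → 𝕜) (n : ℕ) :
    (ofScalars E c).partialSum n = ∑ k ∈ Finset.range n, fun x : E => c k • x ^ k := by
  ext x
  simp [partialSum, ofScalars_apply_eq]

end FormalMultilinearSeries

theorem HasFPowerSeriesOnBall.le_ofScalars_radius {𝕜 : Type*} (E : Type*)
    [NontriviallyNormedField 𝕜] [NormedRing E] [NormedAlgebra 𝕜 E] [NormOneClass E]
    {f : 𝕜 → 𝕜} {c : ℕ → 𝕜} {r : ℝ≥0∞} (hf : HasFPowerSeriesOnBall f (ofScalars 𝕜 c) 0 r) :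
    r ≤ (ofScalars E c).radius :=
  (ofScalars_radius_eq_ofScalars_radius E 𝕜 c).symm ▸ hf.r_le

section Algebraic

variable {A : Type*} [Ring A] [StarRing A] [TopologicalSpace A] [Algebra ℝ A]
  [ContinuousFunctionalCalculus ℝ A IsSelfAdjoint]

theorem cfc_mul_one_add_sq_sub_one {a : A} (ha : IsSelfAdjoint a) (s : ℝ) :
    cfc (fun x : ℝ => s * (1 + x ^ 2) - 1) a = s • (1 + a ^ 2) - 1 := by
  rw [cfc_sub .., cfc_const_mul .., cfc_add .., cfc_const_one .., cfc_pow_id ..]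

theorem cfc_div_sqrt_one_add_sq_eq [ContinuousMap.UniqueHom ℝ A] {a : A} (ha : IsSelfAdjoint a)
    {s : ℝ} (hs : 0 < s) :
    cfc (fun x : ℝ => x / √(1 + x ^ 2)) a = s ^ (-(1 / 2 : ℝ)) •
      (a * cfc (fun y : ℝ => (1 + y) ^ (-(1 / 2 : ℝ))) (s⁻¹ • (1 + a ^ 2) - 1)) := by
  have hpos : ∀ x : ℝ, 0 < 1 + (s⁻¹ * (1 + x ^ 2) - 1) := fun x => by
    rw [add_sub_cancel]; positivity
  have hpoint : ∀ x : ℝ, x / √(1 + x ^ 2)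
      = s ^ (-(1 / 2 : ℝ)) * (x * (1 + (s⁻¹ * (1 + x ^ 2) - 1)) ^ (-(1 / 2 : ℝ))) := fun x => by
    rw [add_sub_cancel, Real.mul_rpow (inv_nonneg.2 hs.le) (by positivity), Real.inv_rpow hs.le,
      Real.rpow_neg hs.le, Real.sqrt_eq_rpow, Real.rpow_neg (by positivity)]
    field_simp
  have hcomp : Continuous fun x : ℝ => (1 + (s⁻¹ * (1 + x ^ 2) - 1)) ^ (-(1 / 2 : ℝ)) :=
    (by fun_prop : Continuous _).rpow_const fun x => Or.inl (hpos x).ne'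
  have hcont : ContinuousOn (fun y : ℝ => (1 + y) ^ (-(1 / 2 : ℝ)))
      ((fun x : ℝ => s⁻¹ * (1 + x ^ 2) - 1) '' spectrum ℝ a) := by
    rintro _ ⟨x, -, rfl⟩
    exact ((continuousAt_const.add continuousAt_id).rpow_const
      (Or.inl (hpos x).ne')).continuousWithinAt
  rw [cfc_congr (fun x _ => hpoint x), cfc_const_mul _ _ _ (by fun_prop),
    cfc_mul _ _ _ (by fun_prop) hcomp.continuousOn, cfc_id' .., cfc_comp' _ _ _ hcont,
    cfc_mul_one_add_sq_sub_one ha]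

end Algebraic

section PowerSeries

variable {A : Type*} [NormedRing A] [StarRing A] [NormedAlgebra ℝ A] [CompleteSpace A]
  [NormOneClass A] [ContinuousFunctionalCalculus ℝ A IsSelfAdjoint]

theorem cfc_eq_ofScalars_sum {f : ℝ → ℝ} {c : ℕ → ℝ} {r : ℝ≥0∞}
    (hf : HasFPowerSeriesOnBall f (ofScalars ℝ c) 0 r) {a : A} (ha : IsSelfAdjoint a)
    (har : ‖a‖ₑ < r) : cfc f a = (ofScalars A c).sum a := by
  obtain ⟨r', har', hr'⟩ := ENNReal.lt_iff_exists_nnreal_btwn.1 har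
  have hspec : spectrum ℝ a ⊆ Metric.ball 0 r' := fun x hx => by
    rw [mem_ball_zero_iff]
    exact (spectrum.norm_le_norm_of_mem hx).trans_lt (by exact_mod_cast enorm_lt_coe.1 har')
  have hcfc : Tendsto (fun n => cfc ((ofScalars ℝ c).partialSum n) a) atTop (𝓝 (cfc f a)) := by
    refine tendsto_cfc_fun ?_ (Eventually.of_forall fun n => ?_)
    · simpa using (hf.tendstoUniformlyOn hr').mono hspec
    · exact ((ofScalars ℝ c).partialSum_continuous n).continuousOn
  have hsum : Tendsto (fun n => (ofScalars A c).partialSum n a) atTop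
      (𝓝 ((ofScalars A c).sum a)) := by
    have hrad : ‖a‖ₑ < (ofScalars A c).radius := har.trans_le (hf.le_ofScalars_radius A)
    simpa using ((ofScalars A c).hasFPowerSeriesOnBall (pos_of_gt hrad)).tendsto_partialSum
      (y := a) (by simpa using hrad)
  refine tendsto_nhds_unique (hcfc.congr fun n => ?_) hsum
  rw [ofScalars_partialSum, ofScalars_partialSum, cfc_sum _ _ _ (fun k _ => by fun_prop),
    Finset.sum_apply]
  exact Finset.sum_congr rfl fun k _ => by rw [cfc_smul .., cfc_pow_id ..]

theorem ContDiffAt.cfc_of_hasFPowerSeriesOnBall {E : Type*} [NormedAddCommGroup E]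
    [NormedSpace ℝ E] {f : ℝ → ℝ} {c : ℕ → ℝ} {r : ℝ≥0∞}
    (hf : HasFPowerSeriesOnBall f (ofScalars ℝ c) 0 r) {a : E → A} {x₀ : E} {n : WithTop ℕ∞}
    (ha : ContDiffAt ℝ n a x₀) (hsa : ∀ᶠ x in 𝓝 x₀, IsSelfAdjoint (a x)) (har : ‖a x₀‖ₑ < r) :
    ContDiffAt ℝ n (fun x => cfc f (a x)) x₀ := by
  have hrad : ‖a x₀‖ₑ < (ofScalars A c).radius := har.trans_le (hf.le_ofScalars_radius A)
  have hsum : ContDiffAt ℝ n (fun x => (ofScalars A c).sum (a x)) x₀ :=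
    (((ofScalars A c).hasFPowerSeriesOnBall (pos_of_gt hrad)).analyticAt_of_mem
      (by simpa using hrad)).contDiffAt.comp x₀ ha
  refine hsum.congr_of_eventuallyEq ?_
  filter_upwards [hsa, ha.continuousAt.enorm.eventually (gt_mem_nhds har)] with x hx hxr
  exact cfc_eq_ofScalars_sum hf hx hxr

end PowerSeries

theorem norm_inv_smul_one_add_sq_sub_one_lt_one {A : Type*} [NormedRing A] [StarRing A]
    [NormedAlgebra ℝ A] [CompleteSpace A] [NormOneClass A]
    [IsometricContinuousFunctionalCalculus ℝ A IsSelfAdjoint] {a : A} (ha : IsSelfAdjoint a) :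
    ‖(1 + ‖a‖ ^ 2)⁻¹ • (1 + a ^ 2) - 1‖ < 1 := by
  rw [← cfc_mul_one_add_sq_sub_one ha]
  refine norm_cfc_lt one_pos fun x hx => ?_
  have hxa : |x| ≤ ‖a‖ := spectrum.norm_le_norm_of_mem hx
  have hsq : x ^ 2 ≤ ‖a‖ ^ 2 := sq_le_sq' (neg_le_of_abs_le hxa) (le_of_abs_le hxa)
  have hpos : 0 < (1 + ‖a‖ ^ 2)⁻¹ * (1 + x ^ 2) := by positivity
  have hle : (1 + ‖a‖ ^ 2)⁻¹ * (1 + x ^ 2) ≤ 1 :=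
    inv_mul_le_one_of_le₀ (by linarith) (by positivity)
  rw [Real.norm_eq_abs, abs_lt]
  constructor <;> linarith

theorem contDiff_vartheta_of_contDiff
    (H : Type*) [NormedAddCommGroup H] [InnerProductSpace ℂ H] [CompleteSpace H]
    (D : ℝ → (H →L[ℂ] H)) (hD : ContDiff ℝ 1 D)
    (hsa : ∀ t, IsSelfAdjoint (D t)) :
    ContDiff ℝ 1 (fun t => cfc (fun x : ℝ => x / Real.sqrt (1 + x ^ 2)) (D t)) := by
  obtain hH | hH := subsingleton_or_nontrivial H
  · convert contDiff_const (c := (0 : H →L[ℂ] H))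
    exact Subsingleton.elim _ _
  refine contDiff_iff_contDiffAt.2 fun t₀ => ?_
  set s := 1 + ‖D t₀‖ ^ 2
  have hY : ContDiff ℝ 1 fun t => s⁻¹ • (1 + D t ^ 2) - 1 :=
    ((contDiff_const.add (hD.pow 2)).const_smul _).sub contDiff_const
  have hYsa : ∀ t, IsSelfAdjoint (s⁻¹ • (1 + D t ^ 2) - 1) := fun t =>
    cfc_mul_one_add_sq_sub_one (hsa t) s⁻¹ ▸ cfc_predicate _ _
  have hYlt : ‖s⁻¹ • (1 + D t₀ ^ 2) - 1‖ₑ < 1 := by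
    rw [← ENNReal.coe_one, enorm_lt_coe, ← NNReal.coe_lt_coe]
    exact norm_inv_smul_one_add_sq_sub_one_lt_one (hsa t₀)
  have hbinom := hY.contDiffAt.cfc_of_hasFPowerSeriesOnBall
    (Real.one_add_rpow_hasFPowerSeriesOnBall_zero (a := -(1 / 2))) (.of_forall hYsa) hYlt
  simp_rw [cfc_div_sqrt_one_add_sq_eq (hsa _) (by positivity : 0 < s)]
  exact (hD.contDiffAt.mul hbinom).const_smul _
end

section
/- Let H be a complex Hilbert space, let A, B₀, B₁ ∈ B(H) with B₀ and B₁ positive, and let 0 ≤ θ ≤ 1. Then ‖B₁^{1−θ} ∘ A ∘ B₀^{θ}‖ ≤ ‖B₁ ∘ A‖^{1−θ} · ‖A ∘ B₀‖^{θ}. -/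
/-!
Write `F t = ‖b₁ ^ (1 - t) * a * b₀ ^ t‖`. The C⋆-identity together with `r(xy) = r(yx)` for the
spectral radius gives midpoint log-convexity `F ((s + u) / 2) ^ 2 ≤ F s * F u`: with
`m = (s + u) / 2`, `p = b₁ ^ (1 - m)` and `q = b₀ ^ m`,
`‖p a q‖² = r(p a q q a⋆ p) = r(p a b₀ᵘ b₀ˢ a⋆ p) = r(b₀ˢ a⋆ p p a b₀ᵘ)`
`= r((b₁¹⁻ˢ a b₀ˢ)⋆ (b₁¹⁻ᵘ a b₀ᵘ)) ≤ F s * F u`.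
Iterating gives `F t ≤ F 0 ^ (1 - t) * F 1 ^ t` at dyadic `t`, and since `t ↦ b ^ t` is continuous
for `t > 0`, this extends to all of `[0, 1]`.
-/

open Filter Topology Set
open scoped NNReal ENNReal

section MidpointLogConvex

variable {f : ℝ → ℝ}

/- Natural powers keep the induction free of `0 ^ 0` conventions. -/
theorem apply_dyadic_pow_le_of_sq_le_mul (h_nonneg : ∀ t ∈ Icc (0 : ℝ) 1, 0 ≤ f t)
    (h_mid : ∀ s ∈ Icc (0 : ℝ) 1, ∀ u ∈ Icc (0 : ℝ) 1, f ((s + u) / 2) ^ 2 ≤ f s * f u)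
    (n k : ℕ) (hk : k ≤ 2 ^ n) :
    f (k / 2 ^ n) ^ 2 ^ n ≤ f 0 ^ (2 ^ n - k) * f 1 ^ k := by
  induction n generalizing k with
  | zero =>
    interval_cases k <;> simp
  | succ n ih =>
    have mem : ∀ m : ℕ, m ≤ 2 ^ n → (m : ℝ) / 2 ^ n ∈ Icc (0 : ℝ) 1 := fun m hm ↦
      ⟨by positivity, div_le_one_of_le₀ (by exact_mod_cast hm) (by positivity)⟩
    rcases Nat.even_or_odd' k with ⟨m, rfl | rfl⟩
    · have hm : m ≤ 2 ^ n := by omega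
      have ht : ((2 * m : ℕ) : ℝ) / 2 ^ (n + 1) = m / 2 ^ n := by
        push_cast; rw [pow_succ]; field_simp
      calc f (((2 * m : ℕ) : ℝ) / 2 ^ (n + 1)) ^ 2 ^ (n + 1)
          = (f (m / 2 ^ n) ^ 2 ^ n) ^ 2 := by rw [ht, pow_succ, pow_mul]
        _ ≤ (f 0 ^ (2 ^ n - m) * f 1 ^ m) ^ 2 :=
          pow_le_pow_left₀ (pow_nonneg (h_nonneg _ (mem m hm)) _) (ih m hm) 2
        _ = f 0 ^ (2 ^ (n + 1) - 2 * m) * f 1 ^ (2 * m) := by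
          rw [mul_pow, ← pow_mul, ← pow_mul, pow_succ]
          congr 2 <;> omega
    · have hm : m + 1 ≤ 2 ^ n := by rw [pow_succ] at hk; omega
      have ht : ((2 * m + 1 : ℕ) : ℝ) / 2 ^ (n + 1) =
          ((m : ℝ) / 2 ^ n + ((m + 1 : ℕ) : ℝ) / 2 ^ n) / 2 := by
        push_cast; rw [pow_succ]; field_simp; ring
      calc f (((2 * m + 1 : ℕ) : ℝ) / 2 ^ (n + 1)) ^ 2 ^ (n + 1)
          = (f (((m : ℝ) / 2 ^ n + ((m + 1 : ℕ) : ℝ) / 2 ^ n) / 2) ^ 2) ^ 2 ^ n := by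
            rw [ht, pow_succ, mul_comm, pow_mul]
        _ ≤ (f (m / 2 ^ n) * f (((m + 1 : ℕ) : ℝ) / 2 ^ n)) ^ 2 ^ n :=
          pow_le_pow_left₀ (sq_nonneg _) (h_mid _ (mem m (by omega)) _ (mem _ hm)) _
        _ = f (m / 2 ^ n) ^ 2 ^ n * f (((m + 1 : ℕ) : ℝ) / 2 ^ n) ^ 2 ^ n := mul_pow _ _ _
        _ ≤ (f 0 ^ (2 ^ n - m) * f 1 ^ m) * (f 0 ^ (2 ^ n - (m + 1)) * f 1 ^ (m + 1)) :=
          mul_le_mul (ih m (by omega)) (ih _ hm) (pow_nonneg (h_nonneg _ (mem _ hm)) _)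
            (mul_nonneg (pow_nonneg (h_nonneg 0 (by simp)) _)
              (pow_nonneg (h_nonneg 1 (by simp)) _))
        _ = f 0 ^ (2 ^ (n + 1) - (2 * m + 1)) * f 1 ^ (2 * m + 1) := by
          rw [mul_mul_mul_comm, ← pow_add, ← pow_add, pow_succ]
          congr 2 <;> omega

theorem apply_dyadic_le_of_sq_le_mul (h_nonneg : ∀ t ∈ Icc (0 : ℝ) 1, 0 ≤ f t)
    (h_mid : ∀ s ∈ Icc (0 : ℝ) 1, ∀ u ∈ Icc (0 : ℝ) 1, f ((s + u) / 2) ^ 2 ≤ f s * f u)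
    (n k : ℕ) (hk : k ≤ 2 ^ n) :
    f (k / 2 ^ n) ≤ f 0 ^ (1 - k / 2 ^ n : ℝ) * f 1 ^ (k / 2 ^ n : ℝ) := by
  have h₀ : 0 ≤ f 0 := h_nonneg 0 (by simp)
  have h₁ : 0 ≤ f 1 := h_nonneg 1 (by simp)
  have hk' : (k : ℝ) / 2 ^ n ∈ Icc (0 : ℝ) 1 :=
    ⟨by positivity, div_le_one_of_le₀ (by exact_mod_cast hk) (by positivity)⟩
  calc f (k / 2 ^ n) = (f (k / 2 ^ n) ^ 2 ^ n) ^ ((2 ^ n : ℕ) : ℝ)⁻¹ :=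
        (Real.pow_rpow_inv_natCast (h_nonneg _ hk') (by positivity)).symm
    _ ≤ (f 0 ^ (2 ^ n - k) * f 1 ^ k) ^ ((2 ^ n : ℕ) : ℝ)⁻¹ :=
        Real.rpow_le_rpow (pow_nonneg (h_nonneg _ hk') _)
          (apply_dyadic_pow_le_of_sq_le_mul h_nonneg h_mid n k hk) (by positivity)
    _ = f 0 ^ (1 - k / 2 ^ n : ℝ) * f 1 ^ (k / 2 ^ n : ℝ) := by
        rw [Real.mul_rpow (by positivity) (by positivity), ← Real.rpow_natCast (f 0),
          ← Real.rpow_natCast (f 1), ← Real.rpow_mul h₀, ← Real.rpow_mul h₁]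
        push_cast [Nat.cast_sub hk]
        field_simp

theorem apply_le_of_sq_le_mul (h_nonneg : ∀ t ∈ Icc (0 : ℝ) 1, 0 ≤ f t)
    (h_mid : ∀ s ∈ Icc (0 : ℝ) 1, ∀ u ∈ Icc (0 : ℝ) 1, f ((s + u) / 2) ^ 2 ≤ f s * f u)
    (h_cont : ContinuousOn f (Ioo 0 1)) {t : ℝ} (ht : t ∈ Icc (0 : ℝ) 1) :
    f t ≤ f 0 ^ (1 - t) * f 1 ^ t := by
  rcases ht.1.eq_or_lt with rfl | ht₀
  · simp
  rcases ht.2.eq_or_lt with rfl | ht₁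
  · simp
  set q : ℕ → ℝ := fun n ↦ (⌊t * 2 ^ n⌋₊ : ℝ) / 2 ^ n
  have hq : Tendsto q atTop (𝓝 t) :=
    (tendsto_nat_floor_mul_div_atTop ht.1).comp (tendsto_pow_atTop_atTop_of_one_lt one_lt_two)
  have hbound (n : ℕ) : f (q n) ≤ f 0 ^ (1 - q n) * f 1 ^ q n :=
    apply_dyadic_le_of_sq_le_mul h_nonneg h_mid n _ <| Nat.floor_le_of_le <| by
      push_cast; exact mul_le_of_le_one_left (by positivity) ht.2
  have hf : ContinuousAt f t := h_cont.continuousAt (Ioo_mem_nhds ht₀ ht₁)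
  have hG : ContinuousAt (fun s ↦ f 0 ^ (1 - s) * f 1 ^ s) t :=
    ((Real.continuousAt_const_rpow' (sub_ne_zero.2 ht₁.ne')).comp
      (continuousAt_const.sub continuousAt_id)).mul
      (Real.continuousAt_const_rpow' ht₀.ne')
  exact le_of_tendsto_of_tendsto' (hf.tendsto.comp hq) (hG.tendsto.comp hq) hbound

end MidpointLogConvex

theorem spectralRadius_mul_comm {𝕜 A : Type*} [NormedField 𝕜] [Ring A] [Algebra 𝕜 A]
    (a b : A) : spectralRadius 𝕜 (a * b) = spectralRadius 𝕜 (b * a) := by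
  suffices key : ∀ x y : A, spectralRadius 𝕜 (x * y) ≤ spectralRadius 𝕜 (y * x) from
    (key a b).antisymm (key b a)
  refine fun x y ↦ iSup₂_le fun k hk ↦ ?_
  rcases eq_or_ne k 0 with rfl | hk₀
  · simp
  · have hk' : k ∈ spectrum 𝕜 (y * x) \ {0} := spectrum.nonzero_mul_comm (𝕜 := 𝕜) x y ▸ ⟨hk, hk₀⟩
    exact le_iSup₂ (f := fun k (_ : k ∈ spectrum 𝕜 (y * x)) ↦ (‖k‖₊ : ℝ≥0∞)) k hk'.1

theorem continuousAt_cfc_fun_of_continuousOn {X R A : Type*} {p : A → Prop}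
    [TopologicalSpace X] [CommSemiring R] [StarRing R] [MetricSpace R]
    [IsTopologicalSemiring R] [ContinuousStar R] [Ring A] [StarRing A] [TopologicalSpace A]
    [Algebra R A] [ContinuousFunctionalCalculus R A p] {f : X → R → R} {a : A} {x₀ : X}
    {U : Set X} (hU : U ∈ 𝓝 x₀) (hf : ContinuousOn ↿f (U ×ˢ spectrum R a)) :
    ContinuousAt (fun x ↦ cfc (f x) a) x₀ := by
  refine continuousAt_cfc_fun (fun u hu ↦ ?_) ?_
  · obtain ⟨v, hv, hvu⟩ :=
      (ContinuousFunctionalCalculus.isCompact_spectrum a).mem_uniformity_of_prod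
        hf (mem_of_mem_nhds hU) (symm_le_uniformity hu)
    rw [nhdsWithin_eq_nhds.2 hU] at hv
    exact mem_of_superset hv hvu
  · filter_upwards [hU] with x hx
    exact hf.comp (Continuous.prodMk_right x).continuousOn fun y hy ↦ ⟨hx, hy⟩

namespace CStarAlgebra

variable {A : Type*} [CStarAlgebra A]

theorem norm_mul_mul_sq_le {a p p₁ p₂ q q₁ q₂ : A} (hp : IsSelfAdjoint p)
    (hp₁ : IsSelfAdjoint p₁) (hq : IsSelfAdjoint q) (hq₂ : IsSelfAdjoint q₂)
    (hpp : p * p = p₁ * p₂) (hqq : q * q = q₁ * q₂) :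
    ‖p * a * q‖ ^ 2 ≤ ‖p₁ * a * q₂‖ * ‖p₂ * a * q₁‖ := by
  nontriviality A
  have hX : (p * a * q) * star (p * a * q) = (p * a * q₁) * star (p * a * q₂) := by
    simp only [star_mul, hp.star_eq, hq.star_eq, hq₂.star_eq, mul_assoc]
    rw [← mul_assoc q q, hqq, mul_assoc]
  have hY : star (p * a * q₂) * (p * a * q₁) = star (p₁ * a * q₂) * (p₂ * a * q₁) := by
    simp only [star_mul, hp.star_eq, hp₁.star_eq, hq₂.star_eq, mul_assoc]
    rw [← mul_assoc p p, hpp, mul_assoc]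
  have key : ((‖p * a * q‖₊ * ‖p * a * q‖₊ : ℝ≥0) : ℝ≥0∞) ≤
      ((‖p₁ * a * q₂‖₊ * ‖p₂ * a * q₁‖₊ : ℝ≥0) : ℝ≥0∞) :=
    calc ((‖p * a * q‖₊ * ‖p * a * q‖₊ : ℝ≥0) : ℝ≥0∞)
        = spectralRadius ℂ ((p * a * q) * star (p * a * q)) := by
          rw [(IsSelfAdjoint.mul_star_self _).spectralRadius_eq_nnnorm,
            CStarRing.nnnorm_self_mul_star]
      _ = spectralRadius ℂ (star (p₁ * a * q₂) * (p₂ * a * q₁)) := by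
          rw [hX, spectralRadius_mul_comm, hY]
      _ ≤ ‖star (p₁ * a * q₂) * (p₂ * a * q₁)‖₊ := spectrum.spectralRadius_le_nnnorm _
      _ ≤ ((‖p₁ * a * q₂‖₊ * ‖p₂ * a * q₁‖₊ : ℝ≥0) : ℝ≥0∞) := by
          rw [← nnnorm_star (p₁ * a * q₂)]
          exact_mod_cast nnnorm_mul_le _ _
  rw [sq]
  exact_mod_cast key

variable [PartialOrder A] [StarOrderedRing A]

theorem _root_.CFC.rpow_add_of_nonneg (b : A) {s t : ℝ} (hs : 0 ≤ s) (ht : 0 ≤ t) :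
    b ^ (s + t) = b ^ s * b ^ t := by
  simp only [CFC.rpow_def]
  rw [← cfc_mul _ _ b]
  exact cfc_congr fun x _ ↦ NNReal.rpow_add_of_nonneg x hs ht

theorem _root_.CFC.continuousAt_const_rpow (b : A) {t : ℝ} (ht : 0 < t) :
    ContinuousAt (fun s : ℝ ↦ b ^ s) t := by
  simp only [CFC.rpow_def]
  refine continuousAt_cfc_fun_of_continuousOn (f := fun s (x : ℝ≥0) ↦ x ^ s) (Ioi_mem_nhds ht) ?_
  rintro ⟨s, x⟩ ⟨hs, -⟩
  exact ((NNReal.continuousAt_rpow (Or.inr hs)).comp (f := Prod.swap)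
    continuous_swap.continuousAt).continuousWithinAt

theorem norm_rpow_mul_mul_rpow_midpoint_sq_le (a b₀ b₁ : A) {s u : ℝ}
    (hs : s ∈ Icc (0 : ℝ) 1) (hu : u ∈ Icc (0 : ℝ) 1) :
    ‖b₁ ^ (1 - (s + u) / 2) * a * b₀ ^ ((s + u) / 2)‖ ^ 2 ≤
      ‖b₁ ^ (1 - s) * a * b₀ ^ s‖ * ‖b₁ ^ (1 - u) * a * b₀ ^ u‖ := by
  have hsq (b : A) {x y : ℝ} (hx : 0 ≤ x) (hy : 0 ≤ y) :
      b ^ ((x + y) / 2) * b ^ ((x + y) / 2) = b ^ x * b ^ y := by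
    rw [← CFC.rpow_add_of_nonneg b (by positivity) (by positivity),
      ← CFC.rpow_add_of_nonneg b hx hy, add_halves]
  refine norm_mul_mul_sq_le CFC.rpow_nonneg.isSelfAdjoint CFC.rpow_nonneg.isSelfAdjoint
    CFC.rpow_nonneg.isSelfAdjoint CFC.rpow_nonneg.isSelfAdjoint ?_
    (add_comm s u ▸ hsq b₀ hu.1 hs.1)
  rw [← hsq b₁ (sub_nonneg.2 hs.2) (sub_nonneg.2 hu.2)]
  ring_nf

theorem continuousOn_norm_rpow_mul_mul_rpow (a b₀ b₁ : A) :
    ContinuousOn (fun t : ℝ ↦ ‖b₁ ^ (1 - t) * a * b₀ ^ t‖) (Ioo 0 1) := fun _ ht ↦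
  ((((CFC.continuousAt_const_rpow b₁ (sub_pos.2 ht.2)).comp
    (continuousAt_const.sub continuousAt_id)).mul continuousAt_const).mul
    (CFC.continuousAt_const_rpow b₀ ht.1)).norm.continuousWithinAt

theorem norm_rpow_mul_mul_rpow_le (a : A) {b₀ b₁ : A} (hb₀ : 0 ≤ b₀) (hb₁ : 0 ≤ b₁) {θ : ℝ}
    (hθ : θ ∈ Icc (0 : ℝ) 1) :
    ‖b₁ ^ (1 - θ) * a * b₀ ^ θ‖ ≤ ‖b₁ * a‖ ^ (1 - θ) * ‖a * b₀‖ ^ θ := by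
  have h := apply_le_of_sq_le_mul (f := fun t ↦ ‖b₁ ^ (1 - t) * a * b₀ ^ t‖)
    (fun _ _ ↦ norm_nonneg _)
    (fun _ hs _ hu ↦ norm_rpow_mul_mul_rpow_midpoint_sq_le a b₀ b₁ hs hu)
    (continuousOn_norm_rpow_mul_mul_rpow a b₀ b₁) hθ
  simpa [CFC.rpow_zero, CFC.rpow_one, hb₀, hb₁] using h

end CStarAlgebra

theorem interpolation_norm_estimate_fractional_powers
    (H : Type*) [NormedAddCommGroup H] [InnerProductSpace ℂ H] [CompleteSpace H]
    (A B₀ B₁ : H →L[ℂ] H) (hB₀ : B₀.IsPositive) (hB₁ : B₁.IsPositive)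
    (θ : ℝ) (hθ0 : 0 ≤ θ) (hθ1 : θ ≤ 1) :
    ‖cfc (fun x : ℝ => x ^ (1 - θ)) B₁ ∘L A ∘L cfc (fun x : ℝ => x ^ θ) B₀‖ ≤
      ‖B₁ ∘L A‖ ^ (1 - θ) * ‖A ∘L B₀‖ ^ θ := by
  have hB₀' : 0 ≤ B₀ := (ContinuousLinearMap.nonneg_iff_isPositive B₀).2 hB₀
  have hB₁' : 0 ≤ B₁ := (ContinuousLinearMap.nonneg_iff_isPositive B₁).2 hB₁
  rw [← CFC.rpow_eq_cfc_real hB₀', ← CFC.rpow_eq_cfc_real hB₁']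
  simpa only [ContinuousLinearMap.mul_def, ContinuousLinearMap.comp_assoc] using
    CStarAlgebra.norm_rpow_mul_mul_rpow_le A hB₀' hB₁' ⟨hθ0, hθ1⟩
end

section
/- Let H be a complex Hilbert space, let dom ⊆ H be a dense subspace, let T : dom → H be a linear map, and let S ∈ B(H) satisfy: Sη ∈ dom and T(Sη) = η for every η ∈ H, and S(Tξ) = ξ for every ξ ∈ dom. Define L(T) to be the set of all B ∈ B(H) for which there exists a symmetric linear operator A, defined on a subspace dom(A) ⊇ dom, such that Bη = A(Sη) for every η ∈ H. Then L(T) = { B ∈ B(H) : ⟨B(Tξ), η⟩ = ⟨ξ, B(Tη)⟩ for all ξ, η ∈ dom }, and L(T) is a closed subset of B(H) in the operator-norm topology. (This is the paper's lemma that the space L(D) of bounded operators of the form A(1+D²)^{−1/2}, with A symmetric and dom(D) ⊆ dom(A), is a closed subspace of B(H); here T plays the role of (1+D²)^{1/2} on dom(D) and S the role of its bounded inverse (1+D²)^{−1/2}.) -/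
open scoped InnerProductSpace

theorem LD_characterization_and_closed
    (H : Type*) [NormedAddCommGroup H] [InnerProductSpace ℂ H] [CompleteSpace H]
    (p : Submodule ℂ H) (hdense : Dense (p : Set H))
    (T : p →ₗ[ℂ] H) (S : H →L[ℂ] H)
    (hSmem : ∀ η : H, S η ∈ p)
    (hTS : ∀ η : H, T ⟨S η, hSmem η⟩ = η)
    (hST : ∀ ξ : p, S (T ξ) = (ξ : H))
    (LT : Set (H →L[ℂ] H))
    (hLT : LT = {B : H →L[ℂ] H |
      ∃ (pA : Submodule ℂ H) (hpA : p ≤ pA) (A : pA →ₗ[ℂ] H),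
        (∀ ξ η : pA, ⟪A ξ, (η : H)⟫_ℂ = ⟪(ξ : H), A η⟫_ℂ) ∧
        ∀ η : H, B η = A ⟨S η, hpA (hSmem η)⟩}) :
    LT = {B : H →L[ℂ] H | ∀ ξ η : p, ⟪B (T ξ), (η : H)⟫_ℂ = ⟪(ξ : H), B (T η)⟫_ℂ} ∧
      IsClosed LT := by
  have key : LT = {B : H →L[ℂ] H |
      ∀ ξ η : p, ⟪B (T ξ), (η : H)⟫_ℂ = ⟪(ξ : H), B (T η)⟫_ℂ} := by
    rw [hLT]
    ext B
    constructor
    · rintro ⟨pA, hpA, A, hsym, hB⟩ ξ η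
      have h1 : ∀ ζ : p, B (T ζ) = A ⟨(ζ : H), hpA ζ.2⟩ := by
        intro ζ
        rw [hB]
        congr 1
        ext
        simp [hST]
      rw [h1 ξ, h1 η]
      exact hsym ⟨ξ, hpA ξ.2⟩ ⟨η, hpA η.2⟩
    · intro hB
      refine ⟨p, le_refl p, B.toLinearMap.comp T, fun ξ η => hB ξ η, fun η => ?_⟩
      simp [hTS]
  refine ⟨key, ?_⟩
  rw [key]
  have heq : {B : H →L[ℂ] H | ∀ ξ η : p, ⟪B (T ξ), (η : H)⟫_ℂ = ⟪(ξ : H), B (T η)⟫_ℂ}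
      = ⋂ (ξ : p) (η : p),
        {B : H →L[ℂ] H | ⟪B (T ξ), (η : H)⟫_ℂ = ⟪(ξ : H), B (T η)⟫_ℂ} := by
    ext B; simp [Set.mem_iInter]
  rw [heq]
  refine isClosed_iInter fun ξ => isClosed_iInter fun η => isClosed_eq ?_ ?_
  · exact ((ContinuousLinearMap.apply ℂ H (T ξ)).continuous).inner continuous_const
  · exact continuous_const.inner ((ContinuousLinearMap.apply ℂ H (T η)).continuous)
end
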